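/- arXiv:1603.03931 — 3 statements merged into one kernel-verified Lean document; each statement's English description precedes it below -/
import Mathlib

section
/- Let A(t) = ∑_{n=0}^∞ a_n t^n be a real power series. Suppose A(t) = H(t)/(1 - c t) where c is a nonzero real constant and H is a power series whose radius of convergence is strictly greater than |c|⁻¹. Then lim_{n→∞} a_n / c^n exists and equals H(c⁻¹). -/
open Filter Topology

/-! Dividing `aₙ = c aₙ₋₁ + Hₙ` by `cⁿ` telescopes: `aₙ / cⁿ` is the `n`-th partial sum of
`∑ Hₖ c⁻ᵏ`, and this series converges absolutely because `|c⁻¹| < r` lies inside the disc of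
convergence of `H`. -/

theorem div_pow_eq_sum_range_of_sub_mul_eq {K : Type*} [Field K] {a H : ℕ → K} {c : K}
    (hc : c ≠ 0) (hdiv : ∀ n : ℕ, a n - c * (if n = 0 then 0 else a (n - 1)) = H n) (n : ℕ) :
    a n / c ^ n = ∑ k ∈ Finset.range (n + 1), H k * c⁻¹ ^ k := by
  induction n with
  | zero => simpa using hdiv 0
  | succ n ih =>
    have hrec : a (n + 1) = c * a n + H (n + 1) := by
      simpa [sub_eq_iff_eq_add'] using hdiv (n + 1)
    rw [Finset.sum_range_succ, ← ih, hrec, inv_pow]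
    field_simp
    ring

theorem summable_mul_pow_of_summable_abs_mul_pow {H : ℕ → ℝ} {r x : ℝ}
    (hH : Summable fun n => |H n| * r ^ n) (hx : |x| ≤ r) :
    Summable fun n => H n * x ^ n :=
  .of_norm_bounded hH fun n => by
    rw [norm_mul, norm_pow, Real.norm_eq_abs, Real.norm_eq_abs]
    gcongr

/-- If `A(t) = ∑ aₙ tⁿ` satisfies `A(t)(1 - c t) = H(t)` as formal power
series (with `c ≠ 0`), and `H` has radius of convergence strictly greater than `|c|⁻¹`
(witnessed by absolute summability at some `r > |c|⁻¹`), then `aₙ / cⁿ → H(c⁻¹)`. -/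
theorem stmt0 (a H : ℕ → ℝ) (c : ℝ) (hc : c ≠ 0)
    (hdiv : ∀ n : ℕ, (a n - c * (if n = 0 then 0 else a (n - 1))) = H n)
    (r : ℝ) (hr : r > |c|⁻¹) (hH : Summable fun n => |H n| * r ^ n) :
    Tendsto (fun n => a n / c ^ n) atTop (𝓝 (∑' n : ℕ, H n * (c⁻¹) ^ n)) := by
  have hsum : Summable fun n => H n * c⁻¹ ^ n :=
    summable_mul_pow_of_summable_abs_mul_pow hH (by rw [abs_inv]; exact hr.le)
  have hpartial := (tendsto_add_atTop_iff_nat 1).mpr hsum.hasSum.tendsto_sum_nat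
  simpa only [div_pow_eq_sum_range_of_sub_mul_eq hc hdiv] using hpartial
end

section
/- As formal power series in t with rational coefficients, ∏_{k=1}^∞ exp(t^k / ((q^k - 1) k)) = ∏_{i=1}^∞ 1/(1 - q^{-i} t), for any real q > 1. -/
open Filter Topology PowerSeries

/-- The formal power series `exp (c * t^k)` in `ℝ⟦t⟧`: its coefficient of `t^m` is
`c^(m/k) / (m/k)!` when `k ∣ m`, and `0` otherwise. -/
noncomputable def expPow (c : ℝ) (k : ℕ) : PowerSeries ℝ :=
  PowerSeries.mk fun m => if k ∣ m then c ^ (m / k) / (Nat.factorial (m / k)) else 0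

/-!
Work modulo `X ^ (n + 1)`. The truncated exponential `F = ∏_{k ≤ n} exp (c^k X^k / k)` has
logarithmic derivative `c ∑_{i < n} (c X)^i`, so `((1 - c X) F)' = -c^(n+1) X^n F`; hence
`(1 - c X) F ≡ 1`, i.e. `F ≡ (1 - c X)⁻¹`. Taking the product over `c = q⁻¹ ^ i`, `i ≤ N`, and
merging exponentials, the `n`-th coefficient of the `N`-th partial product equals that of
`∏_{k ≤ n} exp (s_{N,k} X^k)` with `s_{N,k} = ∑_{i ≤ N} q^(-ik) / k`. These geometric sums tend to
`1 / ((q^k - 1) k)`, and coefficients depend continuously on the `s_{N,k}`.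
-/

open Finset

theorem Finset.sum_Icc_one_eq_sum_range {M : Type*} [AddCommMonoid M] (f : ℕ → M) (n : ℕ) :
    ∑ k ∈ Icc 1 n, f k = ∑ i ∈ range n, f (i + 1) := by
  rw [← Ico_add_one_right_eq_Icc, sum_Ico_eq_sum_range, Nat.add_sub_cancel]
  simp only [add_comm]

theorem Derivation.map_prod_of_eq_mul {R A ι : Type*} [CommSemiring R] [CommSemiring A]
    [Algebra R A] (D : Derivation R A A) (s : Finset ι) {f g : ι → A}
    (h : ∀ i ∈ s, D (f i) = g i * f i) :
    D (∏ i ∈ s, f i) = (∑ i ∈ s, g i) * ∏ i ∈ s, f i := by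
  induction s using Finset.cons_induction with
  | empty => simp
  | cons a s _ ih =>
    rw [prod_cons, Derivation.leibniz, smul_eq_mul, smul_eq_mul,
      ih fun i hi => h i (mem_cons_of_mem hi), h a (mem_cons_self a s), sum_cons]
    ring

theorem PowerSeries.X_pow_succ_dvd_of_derivative {K : Type*} [Field K] [CharZero K] {f : K⟦X⟧}
    {n : ℕ} (h₀ : constantCoeff f = 0) (hd : X ^ n ∣ d⁄dX K f) : X ^ (n + 1) ∣ f := by
  rw [X_pow_dvd_iff] at hd ⊢
  rintro (_ | m) hm
  · simpa using h₀
  · have := hd m (by omega)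
    rw [coeff_derivative] at this
    exact (mul_eq_zero.mp this).resolve_right (Nat.cast_add_one_ne_zero m)

theorem PowerSeries.coeff_eq_of_smodEq_span_X_pow {R : Type*} [CommRing R] {f g : R⟦X⟧} {n m : ℕ}
    (h : f ≡ g [SMOD Ideal.span {(X : R⟦X⟧) ^ n}]) (hm : m < n) : coeff m f = coeff m g := by
  rw [SModEq.sub_mem, Ideal.mem_span_singleton, X_pow_dvd_iff] at h
  simpa [sub_eq_zero] using h m hm

theorem expPow_eq_expand_rescale_exp (c : ℝ) {k : ℕ} (hk : k ≠ 0) :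
    expPow c k = expand k hk (rescale c (exp ℝ)) := by
  ext m
  simp [expPow, coeff_expand, coeff_rescale, coeff_exp, div_eq_mul_inv]

theorem constantCoeff_expPow (c : ℝ) (k : ℕ) : constantCoeff (expPow c k) = 1 := by
  simp [expPow, ← coeff_zero_eq_constantCoeff_apply]

theorem expPow_add (a b : ℝ) {k : ℕ} (hk : k ≠ 0) :
    expPow (a + b) k = expPow a k * expPow b k := by
  simp only [expPow_eq_expand_rescale_exp _ hk, ← map_mul, exp_mul_exp_eq_exp_add]

theorem expPow_zero {k : ℕ} (hk : k ≠ 0) : expPow 0 k = 1 := by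
  simp [expPow_eq_expand_rescale_exp _ hk, rescale_zero]

theorem expPow_sum {ι : Type*} (s : Finset ι) (a : ι → ℝ) {k : ℕ} (hk : k ≠ 0) :
    expPow (∑ i ∈ s, a i) k = ∏ i ∈ s, expPow (a i) k := by
  induction s using Finset.cons_induction with
  | empty => exact expPow_zero hk
  | cons i s _ ih => rw [sum_cons, prod_cons, expPow_add _ _ hk, ih]

theorem derivative_rescale_exp (c : ℝ) :
    d⁄dX ℝ (rescale c (exp ℝ)) = C c * rescale c (exp ℝ) := by
  rw [rescale_eq_subst, derivative_subst (.smul_X' c), derivative_exp, Derivation.map_smul,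
    derivative_X, ← rescale_eq_subst, smul_eq_C_mul, mul_one, mul_comm]

theorem derivative_expPow (c : ℝ) {k : ℕ} (hk : k ≠ 0) :
    d⁄dX ℝ (expPow c k) = C (c * k) * X ^ (k - 1) * expPow c k := by
  simp only [expPow_eq_expand_rescale_exp _ hk, expand_apply]
  rw [derivative_subst (.X_pow hk), derivative_rescale_exp, derivative_pow, derivative_X]
  simp only [← expand_apply _ hk]
  rw [map_mul, expand_C, map_mul, map_natCast]
  ring

theorem derivative_prod_expPow_pow_div (c : ℝ) (n : ℕ) :
    d⁄dX ℝ (∏ k ∈ Icc 1 n, expPow (c ^ k / k) k) =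
      (C c * ∑ i ∈ range n, (C c * X) ^ i) * ∏ k ∈ Icc 1 n, expPow (c ^ k / k) k := by
  rw [Derivation.map_prod_of_eq_mul _ _ fun k hk =>
      derivative_expPow _ (Nat.one_le_iff_ne_zero.mp (mem_Icc.mp hk).1),
    sum_Icc_one_eq_sum_range, mul_sum]
  congr 1
  refine sum_congr rfl fun i _ => ?_
  rw [div_mul_cancel₀ _ (Nat.cast_ne_zero.mpr i.succ_ne_zero), Nat.add_sub_cancel, pow_succ',
    map_mul, map_pow]
  ring

theorem X_pow_succ_dvd_one_sub_C_mul_X_mul_prod_expPow_sub_one (c : ℝ) (n : ℕ) :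
    X ^ (n + 1) ∣ (1 - C c * X) * ∏ k ∈ Icc 1 n, expPow (c ^ k / k) k - 1 := by
  set F := ∏ k ∈ Icc 1 n, expPow (c ^ k / k) k
  have hlin : d⁄dX ℝ (1 - C c * X) = -C c := by simp
  have hderiv : d⁄dX ℝ ((1 - C c * X) * F - 1) = X ^ n * (-C (c ^ (n + 1)) * F) := by
    rw [map_sub, Derivation.leibniz, derivative_prod_expPow_pow_div, hlin,
      Derivation.map_one_eq_zero, smul_eq_mul, smul_eq_mul, pow_succ', map_mul, map_pow]
    linear_combination (C c * F) * mul_neg_geom_sum (C c * X) n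
  refine X_pow_succ_dvd_of_derivative ?_ (hderiv ▸ dvd_mul_right _ _)
  simp [F, map_prod, constantCoeff_expPow]

theorem inv_one_sub_C_mul_X_smodEq_prod_expPow (c : ℝ) (n : ℕ) :
    (1 - C c * X)⁻¹ ≡ ∏ k ∈ Icc 1 n, expPow (c ^ k / k) k
      [SMOD Ideal.span {(X : ℝ⟦X⟧) ^ (n + 1)}] := by
  set F := ∏ k ∈ Icc 1 n, expPow (c ^ k / k) k
  have hinv : (1 - C c * X)⁻¹ * (1 - C c * X) = 1 := PowerSeries.inv_mul_cancel _ (by simp)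
  have hsub : (1 - C c * X)⁻¹ - F = -((1 - C c * X)⁻¹ * ((1 - C c * X) * F - 1)) := by
    linear_combination F * hinv
  rw [SModEq.sub_mem, Ideal.mem_span_singleton, hsub, dvd_neg]
  exact dvd_mul_of_dvd_right (X_pow_succ_dvd_one_sub_C_mul_X_mul_prod_expPow_sub_one c n) _

theorem prod_inv_one_sub_C_mul_X_smodEq_prod_expPow {ι : Type*} (s : Finset ι) (c : ι → ℝ)
    (n : ℕ) :
    ∏ i ∈ s, (1 - C (c i) * X)⁻¹ ≡ ∏ k ∈ Icc 1 n, expPow (∑ i ∈ s, c i ^ k / k) k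
      [SMOD Ideal.span {(X : ℝ⟦X⟧) ^ (n + 1)}] := by
  rw [prod_congr rfl fun k hk => expPow_sum s _ (Nat.one_le_iff_ne_zero.mp (mem_Icc.mp hk).1),
    Finset.prod_comm]
  exact SModEq.prod fun i _ => inv_one_sub_C_mul_X_smodEq_prod_expPow (c i) n

open scoped PowerSeries.WithPiTopology

theorem tendsto_expPow {α : Type*} {l : Filter α} {a : α → ℝ} {c : ℝ} (h : Tendsto a l (𝓝 c))
    (k : ℕ) : Tendsto (fun x => expPow (a x) k) l (𝓝 (expPow c k)) := by
  rw [WithPiTopology.tendsto_iff_coeff_tendsto]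
  intro m
  simp only [expPow, coeff_mk]
  split_ifs
  · exact (h.pow _).div_const _
  · exact tendsto_const_nhds

theorem tendsto_sum_Icc_inv_pow_pow_div {q : ℝ} (hq : 1 < q) {k : ℕ} (hk : k ≠ 0) :
    Tendsto (fun N => ∑ i ∈ Icc 1 N, (q⁻¹ ^ i) ^ k / k) atTop (𝓝 (1 / ((q ^ k - 1) * k))) := by
  set r := q⁻¹ ^ k
  have hr : r < 1 := pow_lt_one₀ (by positivity) (inv_lt_one_of_one_lt₀ hq) hk
  have hgeom := ((hasSum_geometric_of_lt_one (by positivity) hr).mul_left r).tendsto_sum_nat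
  have hlim : r * (1 - r)⁻¹ / k = 1 / ((q ^ k - 1) * k) := by
    have : q ^ k - 1 ≠ 0 := (sub_pos.mpr (one_lt_pow₀ hq hk)).ne'
    simp only [r, inv_pow]
    field_simp
  rw [← hlim]
  convert hgeom.div_const (k : ℝ) using 2 with N
  rw [← sum_div, sum_Icc_one_eq_sum_range]
  congr 1
  exact sum_congr rfl fun i _ => by ring

/-- For real `q > 1`, as formal power series in `t`:
`∏_{k=1}^∞ exp(t^k/((q^k-1)k)) = ∏_{i=1}^∞ (1 - q^{-i} t)⁻¹`.
Both sides are interpreted coefficientwise: the `t^n`-coefficient of the left-hand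
infinite product stabilizes (the `k`-th factor is `1 + O(t^k)`), so it equals the
coefficient of the partial product over `k ≤ n`; the `t^n`-coefficient of the
right-hand infinite product is the limit of the coefficients of its partial products. -/
theorem stmt3 (q : ℝ) (hq : 1 < q) (n : ℕ) :
    Tendsto
      (fun N => PowerSeries.coeff n (∏ i ∈ Finset.Icc 1 N, (1 - C (q⁻¹ ^ i) * X)⁻¹))
      atTop
      (𝓝 (PowerSeries.coeff n
        (∏ k ∈ Finset.Icc 1 n, expPow (1 / ((q ^ k - 1) * k)) k))) := by
  have hcoeff (N : ℕ) : coeff n (∏ i ∈ Icc 1 N, (1 - C (q⁻¹ ^ i) * X)⁻¹) =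
      coeff n (∏ k ∈ Icc 1 n, expPow (∑ i ∈ Icc 1 N, (q⁻¹ ^ i) ^ k / k) k) :=
    coeff_eq_of_smodEq_span_X_pow (prod_inv_one_sub_C_mul_X_smodEq_prod_expPow _ _ n)
      n.lt_succ_self
  simp only [hcoeff]
  refine ((WithPiTopology.continuous_coeff ℝ n).tendsto _).comp
    (tendsto_finsetProd _ fun k hk => tendsto_expPow ?_ k)
  exact tendsto_sum_Icc_inv_pow_pow_div hq (Nat.one_le_iff_ne_zero.mp (mem_Icc.mp hk).1)
end

section
/- Let λ = (λ_1,…,λ_l) be nonnegative integers and let |λ| = ∑_k k λ_k. Define the power series Φ_λ^∞(z) = (1-z) ∏_{k=1}^l binom(M_k(z⁻¹), λ_k) (z^k/(1+z^k))^{λ_k}, where M_k(z⁻¹) = (1/k)∑_{j|k} μ(k/j) z^{-j}. Then Φ_λ^∞(z) is a rational function in z whose denominator (after all cancellation of negative powers) has degree at most |λ| and whose numerator has degree at most |λ|+1; consequently the coefficients a_i of its power series expansion satisfy a linear recurrence of length at most |λ| for all i > |λ|+1. -/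
/-- The "binomial coefficient" `binom(x, j) = x(x-1)⋯(x-j+1)/j!` in a field. -/
noncomputable def ratChoose {K : Type*} [Field K] (x : K) (j : ℕ) : K :=
  (∏ i ∈ Finset.range j, (x - i)) / (Nat.factorial j : K)

/-- The necklace polynomial `M_k(w) = (1/k) ∑_{j ∣ k} μ(k/j) w^j` evaluated in a field. -/
noncomputable def necklace {K : Type*} [Field K] (k : ℕ) (w : K) : K :=
  (1 / (k : K)) * ∑ j ∈ k.divisors, (ArithmeticFunction.moebius (k / j) : K) * w ^ j

/-!
Multiplying the `k`-th factor of `Φ` by `(1 + z^k)^{λ_k}` clears its denominator: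
`z^{k λ_k} binom(M_k(z⁻¹), λ_k) = (1/λ_k!) ∏_{i < λ_k} (z^k M_k(z⁻¹) - i z^k)`, and
`z^k M_k(z⁻¹)` is a polynomial of degree at most `k` because every divisor of `k` is at most `k`.
Hence `D = ∏_k (1 + z^k)^{λ_k}` (with `D(0) = 1`, `deg D ≤ |λ|`) turns `Φ` into a polynomial `N` of
degree at most `|λ| + 1`. Comparing the coefficients of `z^i`, `i > deg N`, in `D · A = N` gives
the recurrence `a_i = ∑_{1 ≤ j ≤ |λ|} (-D_j / D_0) a_{i-j}`.
-/

open Finset Polynomial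

section Recurrence

variable {K : Type*} [Field K]

theorem PowerSeries.coeff_eq_sum_of_coe_mul_mk_eq {D N : K[X]} {a : ℕ → K} {d i : ℕ}
    (h : (D : PowerSeries K) * PowerSeries.mk a = N) (hD0 : D.coeff 0 ≠ 0)
    (hD : D.natDegree ≤ d) (hdi : d ≤ i) (hN : N.natDegree < i) :
    a i = ∑ j ∈ Icc 1 d, -D.coeff j / D.coeff 0 * a (i - j) := by
  have hconv : ∑ j ∈ range (d + 1), D.coeff j * a (i - j) = 0 := by
    have hi := congrArg (PowerSeries.coeff i) h
    simp only [PowerSeries.coeff_mul, Polynomial.coeff_coe, PowerSeries.coeff_mk,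
      Nat.sum_antidiagonal_eq_sum_range_succ_mk, coeff_eq_zero_of_natDegree_lt hN] at hi
    rw [← hi]
    refine sum_subset (range_subset_range.mpr (by omega)) fun j _ hj => ?_
    simp only [mem_range, not_lt] at hj
    simp [coeff_eq_zero_of_natDegree_lt (show D.natDegree < j by omega)]
  rw [sum_range_eq_add_Ico _ (by omega : 0 < d + 1), Ico_add_one_right_eq_Icc, Nat.sub_zero] at hconv
  simp only [div_mul_eq_mul_div, neg_mul, ← sum_div, sum_neg_distrib]
  rw [eq_div_iff hD0]
  linear_combination hconv

end Recurrence

section Necklace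

variable {K : Type*} [Field K]

theorem pow_mul_ratChoose (y x : K) (n : ℕ) :
    y ^ n * ratChoose x n = (n.factorial : K)⁻¹ * ∏ i ∈ range n, (y * x - i * y) := by
  have hfactor (i : ℕ) : y * x - i * y = y * (x - i) := by ring
  simp only [ratChoose, hfactor, prod_mul_distrib, prod_const, card_range]
  ring

noncomputable def necklaceReflect (k : ℕ) : K[X] :=
  C (1 / (k : K)) * ∑ j ∈ k.divisors, C (ArithmeticFunction.moebius (k / j) : K) * X ^ (k - j)

theorem natDegree_necklaceReflect_le (k : ℕ) : (necklaceReflect k : K[X]).natDegree ≤ k := by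
  refine (natDegree_C_mul_le _ _).trans (natDegree_sum_le_of_forall_le _ _ fun j _ => ?_)
  exact (natDegree_C_mul_le _ _).trans ((natDegree_X_pow_le _).trans (Nat.sub_le k j))

theorem algebraMap_necklaceReflect (k : ℕ) :
    algebraMap K[X] (RatFunc K) (necklaceReflect k) = RatFunc.X ^ k * necklace k RatFunc.X⁻¹ := by
  simp only [necklaceReflect, necklace, map_mul, map_sum, map_pow, RatFunc.algebraMap_C,
    RatFunc.algebraMap_X, map_div₀, map_one, map_natCast, map_intCast, mul_sum]
  refine sum_congr rfl fun j hj => ?_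
  rw [inv_pow, pow_sub₀ _ RatFunc.X_ne_zero (Nat.divisor_le hj)]
  ring

noncomputable def necklaceChooseNum (k n : ℕ) : K[X] :=
  C (n.factorial : K)⁻¹ * ∏ i ∈ range n, (necklaceReflect k - C (i : K) * X ^ k)

theorem natDegree_necklaceChooseNum_le (k n : ℕ) :
    (necklaceChooseNum k n : K[X]).natDegree ≤ k * n := by
  refine (natDegree_C_mul_le _ _).trans ((natDegree_prod_le _ _).trans ?_)
  have hfactor (i : ℕ) : (necklaceReflect k - C (i : K) * X ^ k).natDegree ≤ k :=
    (natDegree_sub_le _ _).trans <| max_le (natDegree_necklaceReflect_le k)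
      ((natDegree_C_mul_le _ _).trans (natDegree_X_pow_le k))
  refine (sum_le_sum fun i _ => hfactor i).trans ?_
  simp [mul_comm]

theorem one_add_X_pow_ne_zero {k : ℕ} (hk : k ≠ 0) : (1 + RatFunc.X ^ k : RatFunc K) ≠ 0 := by
  rw [← RatFunc.algebraMap_X, ← map_pow, ← map_one (algebraMap K[X] (RatFunc K)), ← map_add]
  refine RatFunc.algebraMap_ne_zero fun h => ?_
  simpa [Ne.symm hk] using congrArg (coeff · 0) h

theorem algebraMap_necklaceChooseNum {k : ℕ} (hk : k ≠ 0) (n : ℕ) :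
    algebraMap K[X] (RatFunc K) (necklaceChooseNum k n) = (1 + RatFunc.X ^ k) ^ n *
      (ratChoose (necklace k RatFunc.X⁻¹) n * (RatFunc.X ^ k / (1 + RatFunc.X ^ k)) ^ n) := by
  have hu := one_add_X_pow_ne_zero (K := K) hk
  calc algebraMap K[X] (RatFunc K) (necklaceChooseNum k n)
      = (RatFunc.X ^ k) ^ n * ratChoose (necklace k RatFunc.X⁻¹) n := by
        simp only [pow_mul_ratChoose, necklaceChooseNum, map_mul, map_prod, map_sub,
          algebraMap_necklaceReflect, RatFunc.algebraMap_C, map_pow, RatFunc.algebraMap_X, map_inv₀,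
          map_natCast]
    _ = _ := by rw [div_pow]; field_simp

end Necklace

section Products

variable {K : Type*} [Field K] (s : Finset ℕ) (m : ℕ → ℕ)

theorem coeff_zero_prod_one_add_X_pow (hs : ∀ k ∈ s, k ≠ 0) :
    (∏ k ∈ s, (1 + X ^ k) ^ m k : K[X]).coeff 0 = 1 := by
  rw [coeff_zero_eq_eval_zero, eval_prod]
  exact prod_eq_one fun k hk => by simp [zero_pow (hs k hk)]

theorem natDegree_prod_one_add_X_pow_le :
    (∏ k ∈ s, (1 + X ^ k) ^ m k : K[X]).natDegree ≤ ∑ k ∈ s, k * m k := by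
  refine (natDegree_prod_le _ _).trans (sum_le_sum fun k _ => ?_)
  have h : (1 + X ^ k : K[X]).natDegree ≤ k := (natDegree_add_le _ _).trans (by simp)
  rw [mul_comm]
  exact natDegree_pow_le.trans (Nat.mul_le_mul_left _ h)

theorem natDegree_one_sub_X_mul_prod_necklaceChooseNum_le :
    ((1 - X) * ∏ k ∈ s, necklaceChooseNum k (m k) : K[X]).natDegree ≤ ∑ k ∈ s, k * m k + 1 := by
  have h : (1 - X : K[X]).natDegree ≤ 1 := (natDegree_sub_le _ _).trans (by simp)
  rw [add_comm]
  exact natDegree_mul_le.trans <| add_le_add h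
    ((natDegree_prod_le _ _).trans (sum_le_sum fun k _ => natDegree_necklaceChooseNum_le k (m k)))

end Products

/-- For nonnegative integers `λ = (λ_1,…,λ_l)` with `|λ| = ∑ k λ_k·k`,
the rational function
`Φ_λ^∞(z) = (1-z) ∏_{k=1}^l binom(M_k(z⁻¹), λ_k) (z^k/(1+z^k))^{λ_k}` (an element of
`RatFunc ℚ`) can be written as `N/D` with `D(0) ≠ 0`, `deg N ≤ |λ|+1` and `deg D ≤ |λ|`;
consequently the coefficients of its power series expansion satisfy a linear recurrence
of length at most `|λ|` for all `i > |λ|+1`. -/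
theorem stmt14 (l : ℕ) (lam : ℕ → ℕ) (Λ : ℕ) (hΛ : Λ = ∑ k ∈ Finset.Icc 1 l, k * lam k)
    (Φ : RatFunc ℚ)
    (hΦ : Φ = (1 - RatFunc.X) * ∏ k ∈ Finset.Icc 1 l,
      ratChoose (necklace k (RatFunc.X⁻¹)) (lam k) *
        (RatFunc.X ^ k / (1 + RatFunc.X ^ k)) ^ lam k) :
    ∃ (Np Dp : Polynomial ℚ) (c : ℕ → ℚ),
      Dp.coeff 0 ≠ 0 ∧ Np.natDegree ≤ Λ + 1 ∧ Dp.natDegree ≤ Λ ∧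
      (algebraMap (Polynomial ℚ) (RatFunc ℚ) Dp) * Φ =
        algebraMap (Polynomial ℚ) (RatFunc ℚ) Np ∧
      ∀ a : ℕ → ℚ,
        (Dp : PowerSeries ℚ) * PowerSeries.mk a = (Np : PowerSeries ℚ) →
        ∀ i : ℕ, Λ + 1 < i → a i = ∑ j ∈ Finset.Icc 1 Λ, c j * a (i - j) := by
  set D : ℚ[X] := ∏ k ∈ Icc 1 l, (1 + X ^ k) ^ lam k
  set N : ℚ[X] := (1 - X) * ∏ k ∈ Icc 1 l, necklaceChooseNum k (lam k)
  have hpos (k : ℕ) (hk : k ∈ Icc 1 l) : k ≠ 0 := Nat.one_le_iff_ne_zero.mp (mem_Icc.mp hk).1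
  have hD0 : D.coeff 0 ≠ 0 := by simp [D, coeff_zero_prod_one_add_X_pow _ _ hpos]
  have hD : D.natDegree ≤ Λ := hΛ ▸ natDegree_prod_one_add_X_pow_le _ _
  have hN : N.natDegree ≤ Λ + 1 := hΛ ▸ natDegree_one_sub_X_mul_prod_necklaceChooseNum_le _ _
  have hDΦ : algebraMap ℚ[X] (RatFunc ℚ) D * Φ = algebraMap ℚ[X] (RatFunc ℚ) N := by
    rw [hΦ, map_mul, map_prod, map_prod, mul_left_comm, ← prod_mul_distrib,
      prod_congr rfl fun k hk => algebraMap_necklaceChooseNum (hpos k hk) _]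
    simp
  refine ⟨N, D, fun j => -D.coeff j / D.coeff 0, hD0, hN, hD, hDΦ, fun a ha i hi => ?_⟩
  exact PowerSeries.coeff_eq_sum_of_coe_mul_mk_eq ha hD0 hD (by omega) (by omega)
end
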